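/- arXiv:2003.13332 — 2 statements merged into one kernel-verified Lean document; each statement's English description precedes it below -/
import Mathlib

section
/- Let X ∈ ℝ^{m×n} have rows a_i^T, l : ℝ → ℝ convex with conjugate l*, μ > 0, N ≥ 1, and w ∈ ℝ^n. Then min_z [(1/N)∑_{i=1}^N l(a_i^T z) + (1/(2μ))‖z - w‖²] = (1/N) max_{v ∈ ℝ^N} [-(μ/(2N))‖∑_i a_i v_i‖² + ∑_i v_i ⟨a_i, w⟩ - ∑_i l*(v_i)], with primal solution z* = w - (μ/N)∑_i a_i v_i* for any dual maximizer v*. -/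
open RealInnerProductSpace

section Aux


/-- A convex function on ℝ has a subgradient at every point. -/
lemma exists_subgradient (l : ℝ → ℝ) (hconv : ConvexOn ℝ Set.univ l) (t₀ : ℝ) :
    ∃ g : ℝ, ∀ t, l t₀ + g * (t - t₀) ≤ l t := by
  set S : Set ℝ := (fun x => (l t₀ - l x) / (t₀ - x)) '' Set.Iio t₀ with hS
  have hne : S.Nonempty := ⟨_, ⟨t₀ - 1, by simp, rfl⟩⟩
  have hub : ∀ t > t₀, ∀ y ∈ S, y ≤ (l t - l t₀) / (t - t₀) := by
    intro t ht y hy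
    obtain ⟨x, hx, rfl⟩ := hy
    exact hconv.slope_mono_adjacent (Set.mem_univ x) (Set.mem_univ t) hx ht
  have hbdd : BddAbove S := ⟨(l (t₀ + 1) - l t₀) / (t₀ + 1 - t₀), fun y hy =>
    hub (t₀ + 1) (by linarith) y hy⟩
  refine ⟨sSup S, fun t => ?_⟩
  rcases lt_trichotomy t t₀ with h | h | h
  · have hmem : (l t₀ - l t) / (t₀ - t) ∈ S := ⟨t, h, rfl⟩
    have := le_csSup hbdd hmem
    have hpos : 0 < t₀ - t := by linarith
    rw [div_le_iff₀ hpos] at this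
    nlinarith
  · simp [h]
  · have := csSup_le hne (hub t h)
    have hpos : 0 < t - t₀ := by linarith
    rw [le_div_iff₀ hpos] at this
    nlinarith


/-- Convexity-type inequality for the conjugate. -/
lemma lstar_combo (l lstar : ℝ → ℝ)
    (hconj : ∀ v : ℝ, IsLUB (Set.range fun t : ℝ => v * t - l t) (lstar v))
    (u v s : ℝ) (hs0 : 0 ≤ s) (hs1 : s ≤ 1) :
    lstar ((1 - s) * u + s * v) ≤ (1 - s) * lstar u + s * lstar v := by
  refine (hconj ((1 - s) * u + s * v)).2 ?_
  rintro y ⟨t, rfl⟩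
  dsimp only
  have h1 : u * t - l t ≤ lstar u := (hconj u).1 ⟨t, rfl⟩
  have h2 : v * t - l t ≤ lstar v := (hconj v).1 ⟨t, rfl⟩
  nlinarith

/-- If `lstar` satisfies a quadratically-perturbed subgradient inequality at `u`,
then it satisfies the exact subgradient inequality. -/
lemma lstar_subgrad (l lstar : ℝ → ℝ)
    (hconj : ∀ v : ℝ, IsLUB (Set.range fun t : ℝ => v * t - l t) (lstar v))
    (u τ c : ℝ) (hc : 0 ≤ c)
    (hq : ∀ t : ℝ, lstar u + t * τ - c * t ^ 2 ≤ lstar (u + t)) :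
    ∀ v : ℝ, lstar u + (v - u) * τ ≤ lstar v := by
  intro v
  by_contra hlt
  push_neg at hlt
  set ε : ℝ := lstar u + (v - u) * τ - lstar v with hε
  have hεpos : 0 < ε := by linarith
  set s : ℝ := min 1 (ε / (c * (v - u) ^ 2 + ε)) with hsdef
  have hden : 0 < c * (v - u) ^ 2 + ε := by nlinarith
  have hs0 : 0 < s := lt_min one_pos (div_pos hεpos hden)
  have hs1 : s ≤ 1 := min_le_left _ _
  have hcombo := lstar_combo l lstar hconj u v s hs0.le hs1
  have hq' := hq (s * (v - u))
  have harg : u + s * (v - u) = (1 - s) * u + s * v := by ring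
  rw [harg] at hq'
  -- combine: lstar u + s(v-u)τ - c s²(v-u)² ≤ (1-s) lstar u + s lstar v
  have key : s * ((v - u) * τ) - c * s ^ 2 * (v - u) ^ 2 ≤ s * lstar v - s * lstar u := by
    nlinarith
  -- divide by s
  have key2 : (v - u) * τ - c * s * (v - u) ^ 2 ≤ lstar v - lstar u := by
    have := mul_le_mul_of_nonneg_left key (le_of_lt (inv_pos.mpr hs0))
    field_simp at this
    nlinarith [this]
  -- but c*s*(v-u)^2 < ε
  have hsmall : c * s * (v - u) ^ 2 < ε := by
    have hsle : s ≤ ε / (c * (v - u) ^ 2 + ε) := min_le_right _ _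
    have : c * s * (v - u) ^ 2 ≤ c * (ε / (c * (v - u) ^ 2 + ε)) * (v - u) ^ 2 := by
      nlinarith
    have heq : c * (ε / (c * (v - u) ^ 2 + ε)) * (v - u) ^ 2
        = ε * (c * (v - u) ^ 2) / (c * (v - u) ^ 2 + ε) := by ring
    have h2 : c * (ε / (c * (v - u) ^ 2 + ε)) * (v - u) ^ 2 < ε := by
      rw [heq, div_lt_iff₀ hden]
      nlinarith
    linarith
  linarith

/-- Fenchel equality at a subgradient. -/
lemma fenchel_at_subgrad (l lstar : ℝ → ℝ)
    (hconj : ∀ v : ℝ, IsLUB (Set.range fun t : ℝ => v * t - l t) (lstar v))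
    (t₀ g : ℝ) (hg : ∀ t, l t₀ + g * (t - t₀) ≤ l t) :
    lstar g = g * t₀ - l t₀ := by
  refine le_antisymm ((hconj g).2 ?_) ((hconj g).1 ⟨t₀, rfl⟩)
  rintro y ⟨t, rfl⟩
  dsimp only
  have := hg t
  nlinarith

end Aux

theorem prox_dual_linear_composition (n N : ℕ) (hN : 0 < N)
    (a : Fin N → EuclideanSpace ℝ (Fin n)) (l : ℝ → ℝ)
    (hconv : ConvexOn ℝ Set.univ l) (hcont : Continuous l)
    (μ : ℝ) (hμ : 0 < μ) (w : EuclideanSpace ℝ (Fin n))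
    (lstar : ℝ → ℝ)
    (hconj : ∀ v : ℝ, IsLUB (Set.range fun t : ℝ => v * t - l t) (lstar v))
    (vstar : Fin N → ℝ)
    (hmax : ∀ v : Fin N → ℝ,
      -(μ / (2 * N)) * ‖∑ i, v i • a i‖ ^ 2 + ∑ i, v i * ⟪a i, w⟫ - ∑ i, lstar (v i) ≤
      -(μ / (2 * N)) * ‖∑ i, vstar i • a i‖ ^ 2 + ∑ i, vstar i * ⟪a i, w⟫ - ∑ i, lstar (vstar i)) :
    (∀ z, (1 / N : ℝ) * ∑ i, l ⟪a i, w - (μ / N) • ∑ j, vstar j • a j⟫ +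
          1 / (2 * μ) * ‖(w - (μ / N) • ∑ j, vstar j • a j) - w‖ ^ 2 ≤
        (1 / N : ℝ) * ∑ i, l ⟪a i, z⟫ + 1 / (2 * μ) * ‖z - w‖ ^ 2) ∧
    (1 / N : ℝ) * ∑ i, l ⟪a i, w - (μ / N) • ∑ j, vstar j • a j⟫ +
        1 / (2 * μ) * ‖(w - (μ / N) • ∑ j, vstar j • a j) - w‖ ^ 2 =
      (1 / N : ℝ) * (-(μ / (2 * N)) * ‖∑ i, vstar i • a i‖ ^ 2 +
        ∑ i, vstar i * ⟪a i, w⟫ - ∑ i, lstar (vstar i)) := by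
  have hNpos : (0 : ℝ) < N := by exact_mod_cast hN
  have hN0 : (N : ℝ) ≠ 0 := ne_of_gt hNpos
  have hμ0 : μ ≠ 0 := ne_of_gt hμ
  set s : EuclideanSpace ℝ (Fin n) := ∑ j, vstar j • a j with hs
  set zs : EuclideanSpace ℝ (Fin n) := w - (μ / N) • s with hzs
  -- inner products of s
  have hsz : ∀ z : EuclideanSpace ℝ (Fin n), ⟪s, z⟫ = ∑ i, vstar i * ⟪a i, z⟫ := by
    intro z
    rw [hs, sum_inner]
    exact Finset.sum_congr rfl fun i _ => real_inner_smul_left _ _ _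
  have hzi : ∀ i, ⟪a i, zs⟫ = ⟪a i, w⟫ - μ / N * ⟪a i, s⟫ := by
    intro i
    rw [hzs, inner_sub_right, real_inner_smul_right]
  -- norm expansion
  have hns : ∀ (i : Fin N) (t : ℝ),
      ‖s + t • a i‖ ^ 2 = ‖s‖ ^ 2 + 2 * (t * ⟪a i, s⟫) + t ^ 2 * ‖a i‖ ^ 2 := by
    intro i t
    rw [norm_add_sq_real, real_inner_smul_right, real_inner_comm, norm_smul,
      Real.norm_eq_abs, mul_pow, sq_abs]
  -- sums with updated vector
  have hsum1 : ∀ (i : Fin N) (t : ℝ),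
      ∑ j, (Function.update vstar i (vstar i + t)) j • a j = s + t • a i := by
    intro i t
    have h : ∀ j, (Function.update vstar i (vstar i + t)) j • a j
        = vstar j • a j + (if j = i then t • a i else 0) := by
      intro j
      rcases eq_or_ne j i with rfl | h
      · simp [Function.update_self, add_smul]
      · simp [Function.update_of_ne h, h]
    rw [Finset.sum_congr rfl fun j _ => h j, Finset.sum_add_distrib,
      Finset.sum_ite_eq' Finset.univ i fun _ => t • a i]
    simp [hs]
  have hsum2 : ∀ (i : Fin N) (t : ℝ),
      ∑ j, (Function.update vstar i (vstar i + t)) j * ⟪a j, w⟫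
        = (∑ j, vstar j * ⟪a j, w⟫) + t * ⟪a i, w⟫ := by
    intro i t
    have h : ∀ j, (Function.update vstar i (vstar i + t)) j * ⟪a j, w⟫
        = vstar j * ⟪a j, w⟫ + (if j = i then t * ⟪a i, w⟫ else 0) := by
      intro j
      rcases eq_or_ne j i with rfl | h
      · simp [Function.update_self, add_mul]
      · simp [Function.update_of_ne h, h]
    rw [Finset.sum_congr rfl fun j _ => h j, Finset.sum_add_distrib,
      Finset.sum_ite_eq' Finset.univ i fun _ => t * ⟪a i, w⟫]
    simp
  have hsum3 : ∀ (i : Fin N) (t : ℝ),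
      ∑ j, lstar ((Function.update vstar i (vstar i + t)) j)
        = (∑ j, lstar (vstar j)) + (lstar (vstar i + t) - lstar (vstar i)) := by
    intro i t
    have h : ∀ j, lstar ((Function.update vstar i (vstar i + t)) j)
        = lstar (vstar j) + (if j = i then lstar (vstar i + t) - lstar (vstar i) else 0) := by
      intro j
      rcases eq_or_ne j i with rfl | h
      · simp [Function.update_self]
      · simp [Function.update_of_ne h, h]
    rw [Finset.sum_congr rfl fun j _ => h j, Finset.sum_add_distrib,
      Finset.sum_ite_eq' Finset.univ i fun _ => lstar (vstar i + t) - lstar (vstar i)]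
    simp
  -- per-coordinate optimality condition
  have stepA : ∀ (i : Fin N) (t : ℝ),
      lstar (vstar i) + t * ⟪a i, zs⟫ - μ / (2 * N) * ‖a i‖ ^ 2 * t ^ 2
        ≤ lstar (vstar i + t) := by
    intro i t
    have h := hmax (Function.update vstar i (vstar i + t))
    rw [hsum1 i t, hsum2 i t, hsum3 i t, hns i t] at h
    rw [hzi i]
    have hc : μ / (N : ℝ) = 2 * (μ / (2 * N)) := by field_simp
    rw [hc]
    linarith [h]
  -- Fenchel equality at each coordinate
  have hfen : ∀ i : Fin N, l ⟪a i, zs⟫ = vstar i * ⟪a i, zs⟫ - lstar (vstar i) := by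
    intro i
    obtain ⟨g, hg⟩ := exists_subgradient l hconv ⟪a i, zs⟫
    have hcnn : (0 : ℝ) ≤ μ / (2 * N) * ‖a i‖ ^ 2 := by positivity
    have hsub := lstar_subgrad l lstar hconj (vstar i) ⟪a i, zs⟫
      (μ / (2 * N) * ‖a i‖ ^ 2) hcnn (fun t => stepA i t) g
    have hfg := fenchel_at_subgrad l lstar hconj ⟪a i, zs⟫ g hg
    have h2 : vstar i * ⟪a i, zs⟫ - l ⟪a i, zs⟫ ≤ lstar (vstar i) :=
      (hconj (vstar i)).1 ⟨⟪a i, zs⟫, rfl⟩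
    rw [hfg] at hsub
    linarith
  -- norm of zs - w
  have hnormzw : ‖zs - w‖ ^ 2 = (μ / N) ^ 2 * ‖s‖ ^ 2 := by
    have : zs - w = -((μ / N) • s) := by rw [hzs]; abel
    rw [this, norm_neg, norm_smul, Real.norm_eq_abs, mul_pow, sq_abs]
  -- the equality part
  have hEq : (1 / N : ℝ) * ∑ i, l ⟪a i, zs⟫ + 1 / (2 * μ) * ‖zs - w‖ ^ 2 =
      (1 / N : ℝ) * (-(μ / (2 * N)) * ‖s‖ ^ 2 +
        ∑ i, vstar i * ⟪a i, w⟫ - ∑ i, lstar (vstar i)) := by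
    have h1 : ∑ i, l ⟪a i, zs⟫ = ⟪s, zs⟫ - ∑ i, lstar (vstar i) := by
      rw [hsz zs, ← Finset.sum_sub_distrib]
      exact Finset.sum_congr rfl fun i _ => hfen i
    have h2 : ⟪s, zs⟫ = ∑ i, vstar i * ⟪a i, w⟫ - μ / N * ‖s‖ ^ 2 := by
      rw [hzs, inner_sub_right, real_inner_smul_right, real_inner_self_eq_norm_sq, hsz w]
    rw [h1, h2, hnormzw]
    field_simp
    ring
  refine ⟨fun z => ?_, hEq⟩
  rw [hEq]
  -- weak duality
  have hl : ∀ i : Fin N, vstar i * ⟪a i, z⟫ - l ⟪a i, z⟫ ≤ lstar (vstar i) := by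
    intro i
    exact (hconj (vstar i)).1 ⟨⟪a i, z⟫, rfl⟩
  have hsum : ⟪s, z⟫ - ∑ i, lstar (vstar i) ≤ ∑ i, l ⟪a i, z⟫ := by
    rw [hsz z, ← Finset.sum_sub_distrib]
    exact Finset.sum_le_sum fun i _ => by linarith [hl i]
  have key : (0 : ℝ) ≤ 1 / (2 * μ) * ‖z - w + (μ / N) • s‖ ^ 2 := by positivity
  have hexp : 1 / (2 * μ) * ‖z - w + (μ / N) • s‖ ^ 2 =
      (1 / N * ⟪s, z⟫ + 1 / (2 * μ) * ‖z - w‖ ^ 2)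
        - (1 / N * ⟪s, w⟫ - 1 / N * (μ / (2 * N)) * ‖s‖ ^ 2) := by
    rw [norm_add_sq_real, real_inner_smul_right, norm_smul, Real.norm_eq_abs, mul_pow, sq_abs,
      real_inner_comm, inner_sub_right]
    field_simp
    ring
  have hsw : ⟪s, w⟫ = ∑ i, vstar i * ⟪a i, w⟫ := hsz w
  have hscale : (1 / N : ℝ) * (⟪s, z⟫ - ∑ i, lstar (vstar i)) ≤ (1 / N : ℝ) * ∑ i, l ⟪a i, z⟫ :=
    mul_le_mul_of_nonneg_left hsum (by positivity)
  have t2 : 1/(N:ℝ) * ⟪s, w⟫ - 1/(N:ℝ) * (μ/(2*N)) * ‖s‖^2 ≤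
      1/(N:ℝ) * ⟪s, z⟫ + 1/(2*μ) * ‖z - w‖^2 := by linarith only [key, hexp]
  have t3 : (1/(N:ℝ)) * (-(μ / (2 * N)) * ‖s‖ ^ 2 + ∑ i, vstar i * ⟪a i, w⟫ - ∑ i, lstar (vstar i))
      = 1/(N:ℝ) * ⟪s, w⟫ - 1/(N:ℝ) * (μ/(2*N)) * ‖s‖^2 - 1/(N:ℝ) * ∑ i, lstar (vstar i) := by
    rw [hsw]; ring
  linarith only [t2, t3, hscale]
end

section
/- Let μ ≤ 1/(4L), f convex differentiable with L-Lipschitz gradient, h convex, F = f + h, and w̄ = prox_{h,μ}(w - μ∇f(w)). Then for every z ∈ ℝ^n the proximal gradient step satisfies F(w̄) + (1/(4μ))‖w̄ - w‖² ≤ F(z) + (1/(2μ))‖z - w‖². -/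
open RealInnerProductSpace

variable {n : ℕ}
local notation "E" => EuclideanSpace ℝ (Fin n)

lemma line_deriv (f : E → ℝ) (f' : E → E) (hgrad : ∀ x, HasGradientAt f (f' x) x)
    (x v : E) (t : ℝ) :
    HasDerivAt (fun s : ℝ => f (x + s • v)) ⟪f' (x + t • v), v⟫ t := by
  have h1 : HasDerivAt (fun s : ℝ => x + s • v) v t := by
    simpa using ((hasDerivAt_id t).smul_const v).const_add x
  have h2 := (hgrad (x + t • v)).hasFDerivAt
  have h3 := h2.comp_hasDerivAt t h1
  simp [InnerProductSpace.toDual] at h3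
  exact h3

lemma conv_grad_ineq (f : E → ℝ) (f' : E → E) (hconv : ConvexOn ℝ Set.univ f)
    (hgrad : ∀ x, HasGradientAt f (f' x) x) (x z : E) :
    f x + ⟪f' x, z - x⟫ ≤ f z := by
  set v := z - x with hv
  have hg : ConvexOn ℝ Set.univ (fun s : ℝ => f (x + s • v)) := by
    have := hconv.comp_affineMap (AffineMap.lineMap x z)
    simp only [Set.preimage_univ] at this
    have e : (fun s : ℝ => f (x + s • v)) = f ∘ AffineMap.lineMap x z := by
      funext s
      simp [AffineMap.lineMap_apply, hv]
      abel_nf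
    rw [e]
    exact this
  have hd := hg.le_slope_of_hasDerivAt (Set.mem_univ 0) (Set.mem_univ 1) one_pos
    (line_deriv f f' hgrad x v 0)
  have hz : x + (1:ℝ) • v = z := by simp [hv]
  simp only [slope_def_field, zero_smul, add_zero, hz, div_one, sub_zero] at hd
  linarith [hd]

lemma descent_lemma (f : E → ℝ) (f' : E → E) (L : ℝ) (hL : 0 < L)
    (hgrad : ∀ x, HasGradientAt f (f' x) x)
    (hlip : ∀ x y, ‖f' x - f' y‖ ≤ L * ‖x - y‖) (x z : E) :
    f z ≤ f x + ⟪f' x, z - x⟫ + L / 2 * ‖z - x‖ ^ 2 := by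
  set v := z - x with hv
  set d : ℝ → ℝ := fun t => ⟪f' (x + t • v), v⟫ with hd
  have hlipf' : LipschitzWith L.toNNReal f' := by
    apply LipschitzWith.of_dist_le_mul
    intro a b
    rw [dist_eq_norm, dist_eq_norm, Real.coe_toNNReal _ hL.le]
    exact hlip a b
  have hcont : Continuous d := by
    apply Continuous.inner
    · exact hlipf'.continuous.comp (by continuity)
    · exact continuous_const
  have hint : IntervalIntegrable d MeasureTheory.volume 0 1 :=
    hcont.intervalIntegrable 0 1
  have hftc : ∫ t in (0:ℝ)..1, d t = f (x + (1:ℝ) • v) - f (x + (0:ℝ) • v) :=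
    intervalIntegral.integral_eq_sub_of_hasDerivAt (f := fun s : ℝ => f (x + s • v))
      (fun t _ => line_deriv f f' hgrad x v t) hint
  set C := L * ‖v‖ ^ 2 with hC
  have hb : ∀ t ∈ Set.Icc (0:ℝ) 1, d t ≤ d 0 + C * t := by
    intro t ht
    have h1 : d t - d 0 = ⟪f' (x + t • v) - f' (x + (0:ℝ) • v), v⟫ := by
      rw [inner_sub_left]
    have h2 : ⟪f' (x + t • v) - f' (x + (0:ℝ) • v), v⟫ ≤
        ‖f' (x + t • v) - f' (x + (0:ℝ) • v)‖ * ‖v‖ := real_inner_le_norm _ _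
    have h3 : ‖f' (x + t • v) - f' (x + (0:ℝ) • v)‖ ≤ L * (t * ‖v‖) := by
      have := hlip (x + t • v) (x + (0:ℝ) • v)
      have he : x + t • v - (x + (0:ℝ) • v) = t • v := by
        simp
      rw [he, norm_smul] at this
      simpa [abs_of_nonneg ht.1] using this
    have hv0 : (0:ℝ) ≤ ‖v‖ := norm_nonneg _
    have h4 : ‖f' (x + t • v) - f' (x + (0:ℝ) • v)‖ * ‖v‖ ≤ C * t :=
      calc ‖f' (x + t • v) - f' (x + (0:ℝ) • v)‖ * ‖v‖
          ≤ L * (t * ‖v‖) * ‖v‖ := mul_le_mul_of_nonneg_right h3 hv0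
        _ = C * t := by rw [hC]; ring
    linarith
  have hmono : ∫ t in (0:ℝ)..1, d t ≤ ∫ t in (0:ℝ)..1, (d 0 + C * t) := by
    apply intervalIntegral.integral_mono_on zero_le_one hint
    · exact (by continuity : Continuous fun t : ℝ => d 0 + C * t).intervalIntegrable 0 1
    · exact hb
  have hval : ∫ t in (0:ℝ)..1, (d 0 + C * t) = d 0 + C / 2 := by
    rw [intervalIntegral.integral_add intervalIntegrable_const
      (intervalIntegral.intervalIntegrable_id.const_mul C), intervalIntegral.integral_const_mul,
      integral_id, intervalIntegral.integral_const]
    norm_num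
    ring
  have hd0 : d 0 = ⟪f' x, v⟫ := by simp [hd]
  have hz1 : x + (1:ℝ) • v = z := by simp [hv]
  have hz0 : x + (0:ℝ) • v = x := by simp
  rw [hz1, hz0] at hftc
  rw [hval, hftc, hd0] at hmono
  have hC2 : C / 2 = L / 2 * ‖v‖ ^ 2 := by rw [hC]; ring
  linarith

theorem prox_grad_descent_property (n : ℕ)
    (f h : EuclideanSpace ℝ (Fin n) → ℝ)
    (f' : EuclideanSpace ℝ (Fin n) → EuclideanSpace ℝ (Fin n)) (L μ : ℝ)
    (hL : 0 < L) (hμ : 0 < μ) (hμL : μ ≤ 1 / (4 * L))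
    (hconvf : ConvexOn ℝ Set.univ f) (hconvh : ConvexOn ℝ Set.univ h)
    (hgrad : ∀ x, HasGradientAt f (f' x) x)
    (hlip : ∀ x y, ‖f' x - f' y‖ ≤ L * ‖x - y‖)
    (w wbar : EuclideanSpace ℝ (Fin n))
    (hprox : ∀ z, h wbar + 1 / (2 * μ) * ‖wbar - (w - μ • f' w)‖ ^ 2 ≤
        h z + 1 / (2 * μ) * ‖z - (w - μ • f' w)‖ ^ 2) :
    ∀ z, f wbar + h wbar + 1 / (4 * μ) * ‖wbar - w‖ ^ 2 ≤
      f z + h z + 1 / (2 * μ) * ‖z - w‖ ^ 2 := by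
  intro z
  set g : EuclideanSpace ℝ (Fin n) := f' w with hg
  have hexp : ∀ u : EuclideanSpace ℝ (Fin n),
      1 / (2 * μ) * ‖u - (w - μ • g)‖ ^ 2 =
        1 / (2 * μ) * ‖u - w‖ ^ 2 + ⟪u - w, g⟫ + μ / 2 * ‖g‖ ^ 2 := by
    intro u
    have he : u - (w - μ • g) = (u - w) + μ • g := by abel
    rw [he, norm_add_sq_real, real_inner_smul_right, norm_smul]
    rw [Real.norm_eq_abs, abs_of_pos hμ]
    field_simp
  have hp := hprox z
  rw [hexp wbar, hexp z] at hp
  have hdesc := descent_lemma f f' L hL hgrad hlip w wbar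
  have hconv := conv_grad_ineq f f' hconvf hgrad w z
  have hia : ⟪g, wbar - w⟫ = ⟪wbar - w, g⟫ := real_inner_comm _ _
  have hib : ⟪g, z - w⟫ = ⟪z - w, g⟫ := real_inner_comm _ _
  rw [hia] at hdesc
  rw [hib] at hconv
  have hLμ' : L ≤ 1 / (4 * μ) := by
    rw [le_div_iff₀ (by positivity)]
    rw [le_div_iff₀ (by positivity)] at hμL
    linarith
  have hA : (0:ℝ) ≤ ‖wbar - w‖ ^ 2 := by positivity
  have key : L / 2 * ‖wbar - w‖ ^ 2 ≤ 1 / (4 * μ) * ‖wbar - w‖ ^ 2 :=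
    mul_le_mul_of_nonneg_right (by linarith) hA
  have hhalf : 1 / (2 * μ) * ‖wbar - w‖ ^ 2 =
      1 / (4 * μ) * ‖wbar - w‖ ^ 2 + 1 / (4 * μ) * ‖wbar - w‖ ^ 2 := by
    field_simp
    ring
  linarith
end
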